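/- arXiv:1410.8043 — 3 statements merged into one kernel-verified Lean document; each statement's English description precedes it below -/
import Mathlib

section
/- Fix d ≥ 1, T ≥ 1, reals η > 0, L ≥ 0, F ≥ 0, v₀ ≥ 0, and a point x* ∈ ℝ^d. For t = 1,…,T let f_t : ℝ^d → ℝ be convex and differentiable with ‖∇f_t(x)‖₂ ≤ L for all x. Let η_t = η/√t. Let (x̂_t)_{t≥1} and (x̆_t)_{t=1..T} be sequences in ℝ^d satisfying the gradient-descent recursion x̂_{t+1} = x̂_t − η_t ∇f_t(x̆_t), the value-bound (VAP) condition ‖x̆_t − x̂_t‖_∞ ≤ v₀/√t for all t = 1,…,T, and the bounded-diameter condition ½‖x* − x̂_t‖₂² ≤ F² for all t = 1,…,T+1. Then the regret satisfies ∑_{t=1}^T ( f_t(x̆_t) − f_t(x*) ) ≤ η L² √T + (F²/η) √T + 2 √d · L · v₀ · √T; in particular the regret is O(√T). -/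
/-!
With `g_t = ∇f_t(x̆_t)`, convexity gives
`f_t(x̆_t) - f_t(x*) ≤ ⟪g_t, x̂_t - x*⟫ + ⟪g_t, x̆_t - x̂_t⟫`.
Expanding `‖x* - x̂_{t+1}‖²` along the update bounds the first term by
`(‖x* - x̂_t‖² - ‖x* - x̂_{t+1}‖²) / (2η_t) + η_t L² / 2`; since `1/η_t` increases, Abel summation
and the diameter bound make the first part telescope to at most `F² √T / η`. Cauchy–Schwarz and
`‖v‖₂ ≤ √d ‖v‖_∞` bound the second term by `√d L v₀ / √t`, and `∑_{t ≤ T} 1/√t ≤ 2√T` finishes.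
-/

open Real Finset RealInnerProductSpace

section Convex

variable {E : Type*} [NormedAddCommGroup E]

theorem ConvexOn.hasFDerivAt_apply_sub_le [NormedSpace ℝ E] {s : Set E} {f : E → ℝ}
    {f' : E →L[ℝ] ℝ} {x y : E} (hf : ConvexOn ℝ s f) (hx : x ∈ s) (hy : y ∈ s)
    (hf' : HasFDerivAt f f' x) :
    f' (y - x) ≤ f y - f x := by
  set ℓ : ℝ →ᵃ[ℝ] E := AffineMap.lineMap x y
  have hφ : ConvexOn ℝ (ℓ ⁻¹' s) (f ∘ ℓ) := hf.comp_affineMap ℓ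
  have hφ' : HasDerivAt (f ∘ ℓ) (f' (y - x)) 0 := by
    refine HasFDerivAt.comp_hasDerivAt (0 : ℝ) ?_ AffineMap.hasDerivAt_lineMap
    simpa [ℓ] using hf'
  simpa [ℓ, slope_def_field] using
    hφ.le_slope_of_hasDerivAt (by simpa [ℓ] using hx) (by simpa [ℓ] using hy) zero_lt_one hφ'

variable [InnerProductSpace ℝ E] [CompleteSpace E]

theorem ConvexOn.inner_gradient_le_sub {s : Set E} {f : E → ℝ} {x y : E}
    (hf : ConvexOn ℝ s f) (hx : x ∈ s) (hy : y ∈ s) (hfx : DifferentiableAt ℝ f x) :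
    ⟪gradient f x, y - x⟫ ≤ f y - f x := by
  rw [inner_gradient_left]
  exact hf.hasFDerivAt_apply_sub_le hx hy hfx.hasFDerivAt

end Convex

section GradientStep

variable {E : Type*} [NormedAddCommGroup E] [InnerProductSpace ℝ E]

theorem inner_le_of_gradient_step {e L : ℝ} (he : 0 < e) {x z g : E} (hg : ‖g‖ ≤ L) :
    ⟪g, x - z⟫ ≤ (‖z - x‖ ^ 2 - ‖z - (x - e • g)‖ ^ 2) / (2 * e) + e * L ^ 2 / 2 := by
  have hexpand : ‖z - (x - e • g)‖ ^ 2 = ‖z - x‖ ^ 2 - 2 * e * ⟪g, x - z⟫ + e ^ 2 * ‖g‖ ^ 2 := by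
    rw [show z - (x - e • g) = (z - x) + e • g by abel, norm_add_sq_real, real_inner_smul_right,
      norm_smul, real_inner_comm, ← neg_sub x z, inner_neg_right]
    simp only [Real.norm_eq_abs, abs_of_pos he]
    ring
  have hgL : ‖g‖ ^ 2 ≤ L ^ 2 := pow_le_pow_left₀ (norm_nonneg g) hg 2
  have hdiv : (‖z - x‖ ^ 2 - ‖z - (x - e • g)‖ ^ 2) / (2 * e) = ⟪g, x - z⟫ - e * ‖g‖ ^ 2 / 2 := by
    rw [hexpand]
    field_simp
    ring
  rw [hdiv]
  nlinarith

variable [CompleteSpace E]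

theorem ConvexOn.sub_le_of_perturbed_gradient_step {s : Set E} {f : E → ℝ} {x xp z : E}
    {e L δ : ℝ} (hf : ConvexOn ℝ s f) (hxp : xp ∈ s) (hz : z ∈ s)
    (hfxp : DifferentiableAt ℝ f xp) (hg : ‖gradient f xp‖ ≤ L) (he : 0 < e)
    (hδ : ‖xp - x‖ ≤ δ) :
    f xp - f z ≤ (‖z - x‖ ^ 2 - ‖z - (x - e • gradient f xp)‖ ^ 2) / (2 * e)
      + e * L ^ 2 / 2 + L * δ := by
  have hconv := hf.inner_gradient_le_sub hxp hz hfxp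
  have hsplit : ⟪gradient f xp, xp - z⟫ = ⟪gradient f xp, x - z⟫ + ⟪gradient f xp, xp - x⟫ := by
    rw [← inner_add_right, sub_add_sub_cancel']
  have hperturb : ⟪gradient f xp, xp - x⟫ ≤ L * δ :=
    (real_inner_le_norm _ _).trans
      (mul_le_mul hg hδ (norm_nonneg _) ((norm_nonneg _).trans hg))
  rw [← neg_sub xp z, inner_neg_right] at hconv
  linarith [inner_le_of_gradient_step (x := x) (z := z) he hg]

end GradientStep

theorem EuclideanSpace.norm_le_sqrt_card_mul {ι : Type*} [Fintype ι] (x : EuclideanSpace ℝ ι)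
    {r : ℝ} (hr : 0 ≤ r) (hx : ∀ i, |x i| ≤ r) :
    ‖x‖ ≤ √(Fintype.card ι) * r := by
  rw [EuclideanSpace.norm_eq, ← Real.sqrt_sq hr, ← Real.sqrt_mul (Nat.cast_nonneg _)]
  gcongr
  calc ∑ i, ‖x i‖ ^ 2 ≤ ∑ _i : ι, r ^ 2 := by
        gcongr with i
        simpa using hx i
    _ = Fintype.card ι * r ^ 2 := by simp

theorem sum_Icc_one_div_sqrt_le (T : ℕ) : ∑ t ∈ Icc 1 T, 1 / √t ≤ 2 * √T := by
  induction T with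
  | zero => simp
  | succ T ih =>
    rw [sum_Icc_succ_top (by omega), Nat.cast_succ]
    have hpos : 0 < √((T : ℝ) + 1) := Real.sqrt_pos.mpr (by positivity)
    have hstep : 1 / √((T : ℝ) + 1) ≤ 2 * √((T : ℝ) + 1) - 2 * √T := by
      rw [div_le_iff₀ hpos]
      nlinarith [sq_nonneg (√((T : ℝ) + 1) - √T), Real.sq_sqrt (Nat.cast_nonneg T),
        Real.sq_sqrt (by positivity : (0 : ℝ) ≤ T + 1)]
    linarith

theorem sum_Icc_sub_succ_mul_le {a c : ℕ → ℝ} {M : ℝ} (hc : Monotone c) (hc₀ : 0 ≤ c 0) (T : ℕ)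
    (ha : ∀ t ∈ Icc 1 (T + 1), a t ≤ M) :
    ∑ t ∈ Icc 1 T, (a t - a (t + 1)) * c t ≤ M * c T - a (T + 1) * c T := by
  induction T with
  | zero => simpa using mul_le_mul_of_nonneg_right (ha 1 (by simp)) hc₀
  | succ T ih =>
    rw [sum_Icc_succ_top (by omega)]
    have ih := ih fun t ht => ha t (by simp only [mem_Icc] at ht ⊢; omega)
    have haT : a (T + 1) ≤ M := ha (T + 1) (by simp)
    have hcT : c T ≤ c (T + 1) := hc T.le_succ
    nlinarith

theorem stmt_0_general (d T : ℕ)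
    (η L F v₀ : ℝ) (hη : 0 < η) (hL : 0 ≤ L) (hv₀ : 0 ≤ v₀)
    (xstar : EuclideanSpace ℝ (Fin d))
    (f : ℕ → EuclideanSpace ℝ (Fin d) → ℝ)
    (hconv : ∀ t ∈ Finset.Icc 1 T, ConvexOn ℝ Set.univ (f t))
    (hdiff : ∀ t ∈ Finset.Icc 1 T, Differentiable ℝ (f t))
    (hgrad : ∀ t ∈ Finset.Icc 1 T, ∀ x, ‖gradient (f t) x‖ ≤ L)
    (xhat xbreve : ℕ → EuclideanSpace ℝ (Fin d))
    (hrec : ∀ t ∈ Finset.Icc 1 T,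
      xhat (t+1) = xhat t - (η / Real.sqrt t) • gradient (f t) (xbreve t))
    (hvap : ∀ t ∈ Finset.Icc 1 T, ∀ i : Fin d,
      |(xbreve t - xhat t) i| ≤ v₀ / Real.sqrt t)
    (hdiam : ∀ t ∈ Finset.Icc 1 (T+1), (1/2) * ‖xstar - xhat t‖^2 ≤ F^2) :
    ∑ t ∈ Finset.Icc 1 T, (f t (xbreve t) - f t xstar)
      ≤ η * L^2 * Real.sqrt T + (F^2 / η) * Real.sqrt T
        + 2 * Real.sqrt d * L * v₀ * Real.sqrt T := by
  set c : ℕ → ℝ := fun t => √t / (2 * η) with hc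
  set K := η * L ^ 2 / 2 + √d * L * v₀ with hK
  have hstep : ∀ t ∈ Icc 1 T, f t (xbreve t) - f t xstar
      ≤ (‖xstar - xhat t‖ ^ 2 - ‖xstar - xhat (t + 1)‖ ^ 2) * c t + K * (1 / √t) := by
    intro t ht
    have hsqrt : 0 < √(t : ℝ) := Real.sqrt_pos.mpr (by exact_mod_cast (mem_Icc.mp ht).1)
    have hδ : ‖xbreve t - xhat t‖ ≤ √d * (v₀ / √t) := by
      simpa using EuclideanSpace.norm_le_sqrt_card_mul _ (by positivity) (hvap t ht)
    refine ((hconv t ht).sub_le_of_perturbed_gradient_step (Set.mem_univ _) (Set.mem_univ _)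
      (hdiff t ht _) (hgrad t ht _) (div_pos hη hsqrt) hδ).trans_eq ?_
    rw [hrec t ht, hc, hK]
    field_simp
    ring
  have htelescope := sum_Icc_sub_succ_mul_le (a := fun t => ‖xstar - xhat t‖ ^ 2) (c := c)
    (M := 2 * F ^ 2) (fun s t hst => by simp only [c]; gcongr) (by simp [c]) T
    (fun t ht => by linarith [hdiam t ht])
  calc ∑ t ∈ Icc 1 T, (f t (xbreve t) - f t xstar)
      ≤ ∑ t ∈ Icc 1 T,
          ((‖xstar - xhat t‖ ^ 2 - ‖xstar - xhat (t + 1)‖ ^ 2) * c t + K * (1 / √t)) :=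
        sum_le_sum hstep
    _ = ∑ t ∈ Icc 1 T, (‖xstar - xhat t‖ ^ 2 - ‖xstar - xhat (t + 1)‖ ^ 2) * c t
          + K * ∑ t ∈ Icc 1 T, 1 / √t := by rw [sum_add_distrib, mul_sum]
    _ ≤ 2 * F ^ 2 * c T + K * (2 * √T) :=
        add_le_add (htelescope.trans (sub_le_self _ (by positivity)))
          (mul_le_mul_of_nonneg_left (sum_Icc_one_div_sqrt_le T) (by positivity))
    _ = _ := by
        rw [hc, hK]
        field_simp
        ring

/-- Theorem 1 (SGD under VAP, convergence in expectation): regret bound O(√T). -/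
theorem stmt_0 (d T : ℕ) (hd : 1 ≤ d) (hT : 1 ≤ T)
    (η L F v₀ : ℝ) (hη : 0 < η) (hL : 0 ≤ L) (hF : 0 ≤ F) (hv₀ : 0 ≤ v₀)
    (xstar : EuclideanSpace ℝ (Fin d))
    (f : ℕ → EuclideanSpace ℝ (Fin d) → ℝ)
    (hconv : ∀ t ∈ Finset.Icc 1 T, ConvexOn ℝ Set.univ (f t))
    (hdiff : ∀ t ∈ Finset.Icc 1 T, Differentiable ℝ (f t))
    (hgrad : ∀ t ∈ Finset.Icc 1 T, ∀ x, ‖gradient (f t) x‖ ≤ L)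
    (xhat xbreve : ℕ → EuclideanSpace ℝ (Fin d))
    (hrec : ∀ t ∈ Finset.Icc 1 T,
      xhat (t+1) = xhat t - (η / Real.sqrt t) • gradient (f t) (xbreve t))
    (hvap : ∀ t ∈ Finset.Icc 1 T, ∀ i : Fin d,
      |(xbreve t - xhat t) i| ≤ v₀ / Real.sqrt t)
    (hdiam : ∀ t ∈ Finset.Icc 1 (T+1), (1/2) * ‖xstar - xhat t‖^2 ≤ F^2) :
    ∑ t ∈ Finset.Icc 1 T, (f t (xbreve t) - f t xstar)
      ≤ η * L^2 * Real.sqrt T + (F^2 / η) * Real.sqrt T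
        + 2 * Real.sqrt d * L * v₀ * Real.sqrt T :=
  stmt_0_general d T η L F v₀ hη hL hv₀ xstar f hconv hdiff hgrad xhat xbreve hrec hvap hdiam
end

section
/- Fix d ≥ 1, T ≥ 1, integers P ≥ 1, s ≥ 0, reals η > 0, L ≥ 0, F ≥ 0, and x* ∈ ℝ^d. For each t ≥ 1 let f_t : ℝ^d → ℝ be convex and differentiable with ‖∇f_t(x)‖₂ ≤ L for all x, and let η_t = η/√t. Let (x_t) be the reference sequence with x_{t+1} = x_t + u_t where u_t = −η_t ∇f_t(x̃_t), and suppose the noisy views (x̃_t) satisfy the SSP condition: for every t there exist disjoint finite index sets A_t, B_t ⊆ { max(1, t−(s+1)P), …, t+sP } with |A_t| + |B_t| ≤ (2s+1)P such that x̃_t = x_t − ∑_{i∈A_t} u_i + ∑_{i∈B_t} u_i. Assume also ½‖x* − x_t‖₂² ≤ F² for all t = 1,…,T+1. Then the regret R[X] := ∑_{t=1}^T ( f_t(x̃_t) − f_t(x*) ) satisfies R[X] ≤ η L² √T + (F²/η) √T + η L² (2s+1) P ( (s+1)P + 2√T ); in particular R[X] = O(√T) and R[X]/T → 0 as T → ∞.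 -/
/-!
Convexity bounds each regret term `f_t(x̃_t) - f_t(x*)` by `⟪∇f_t(x̃_t), x̃_t - x*⟫`. Splitting
`x̃_t - x* = (x_t - x*) + (x̃_t - x_t)`, the first part is the usual online-gradient-descent term:
expanding `‖x* - x_{t+1}‖²` turns it into a difference of consecutive distances weighted by
`√t / η`, which telescopes to at most `F² √T / η`, plus `η L² / (2√t)`, which sums to `η L² √T`.
The second part is the staleness error: `x̃_t - x_t` is a signed sum of at most `(2s+1)P` updates,
all issued at clocks `≥ max 1 (t - (s+1)P)`, so each has inner product with `∇f_t(x̃_t)` at most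
`η L² / √(max 1 (t - (s+1)P))`; summing over `t` costs at most `(s+1)P + 2√T` such units.
-/

open Real Finset RealInnerProductSpace

section InnerProductSpace

variable {E : Type*} [NormedAddCommGroup E] [InnerProductSpace ℝ E]

theorem ConvexOn.add_fderiv_sub_le {f : E → ℝ} {f' : E →L[ℝ] ℝ} {a : E}
    (hf : ConvexOn ℝ Set.univ f) (hf' : HasFDerivAt f f' a) (y : E) :
    f a + f' (y - a) ≤ f y := by
  let ℓ : ℝ →ᵃ[ℝ] E := AffineMap.lineMap a y
  have hφ : ConvexOn ℝ Set.univ (f ∘ ℓ) := by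
    simpa using hf.comp_affineMap ℓ
  have hφ' : HasDerivAt (f ∘ ℓ) (f' (y - a)) 0 := by
    refine HasFDerivAt.comp_hasDerivAt (0 : ℝ) ?_ AffineMap.hasDerivAt_lineMap
    simpa [ℓ] using hf'
  have := hφ.le_slope_of_hasDerivAt (Set.mem_univ 0) (Set.mem_univ 1) one_pos hφ'
  rw [slope_def_field] at this
  simp only [ℓ, Function.comp_apply, AffineMap.lineMap_apply_zero, AffineMap.lineMap_apply_one,
    sub_zero, div_one] at this
  linarith

theorem ConvexOn.add_inner_sub_le_of_hasGradientAt [CompleteSpace E] {f : E → ℝ} {g a : E}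
    (hf : ConvexOn ℝ Set.univ f) (hg : HasGradientAt f g a) (y : E) :
    f a + ⟪g, y - a⟫ ≤ f y := by
  simpa using hf.add_fderiv_sub_le hg.hasFDerivAt y

theorem inner_sub_eq_of_sub_smul {a : ℝ} (ha : a ≠ 0) (g x z : E) :
    ⟪g, x - z⟫ = (1 / 2 * ‖z - x‖ ^ 2 - 1 / 2 * ‖z - (x - a • g)‖ ^ 2) / a + a / 2 * ‖g‖ ^ 2 := by
  rw [show z - (x - a • g) = (z - x) + a • g by abel, norm_add_sq_real, inner_smul_right,
    norm_smul, mul_pow, Real.norm_eq_abs, sq_abs, real_inner_comm,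
    show x - z = -(z - x) by abel, inner_neg_left]
  field_simp
  ring

theorem inner_sub_sum_add_sum_sub_le {ι : Type*} (g x : E) (u : ι → E) (A B : Finset ι) {M : ℝ}
    (hA : ∀ i ∈ A, |⟪g, u i⟫| ≤ M) (hB : ∀ i ∈ B, |⟪g, u i⟫| ≤ M) :
    ⟪g, x - ∑ i ∈ A, u i + ∑ i ∈ B, u i - x⟫ ≤ (#A + #B) * M := by
  have hA' : -∑ i ∈ A, ⟪g, u i⟫ ≤ #A * M := by
    rw [← sum_neg_distrib, ← nsmul_eq_mul, ← sum_const]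
    exact sum_le_sum fun i hi => (neg_le_abs _).trans (hA i hi)
  have hB' : ∑ i ∈ B, ⟪g, u i⟫ ≤ #B * M := by
    rw [← nsmul_eq_mul, ← sum_const]
    exact sum_le_sum fun i hi => (le_abs_self _).trans (hB i hi)
  rw [show x - ∑ i ∈ A, u i + ∑ i ∈ B, u i - x = ∑ i ∈ B, u i - ∑ i ∈ A, u i by abel,
    inner_sub_right, inner_sum, inner_sum]
  linarith

theorem abs_inner_neg_div_sqrt_smul_le {g v : E} {η L : ℝ} {q i : ℕ} (hη : 0 ≤ η) (hq : 1 ≤ q)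
    (hqi : q ≤ i) (hg : ‖g‖ ≤ L) (hv : ‖v‖ ≤ L) :
    |⟪g, -((η / √i) • v)⟫| ≤ η * L ^ 2 * (1 / √q) := by
  have hq' : (0 : ℝ) < √q := Real.sqrt_pos.2 (by exact_mod_cast hq)
  have hcoeff : η / √i ≤ η / √q :=
    div_le_div_of_nonneg_left hη hq' (Real.sqrt_le_sqrt (by exact_mod_cast hqi))
  have hinner : |⟪g, v⟫| ≤ L ^ 2 := by
    rw [sq]
    exact (abs_real_inner_le_norm g v).trans
      (mul_le_mul hg hv (norm_nonneg v) ((norm_nonneg g).trans hg))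
  rw [inner_neg_right, abs_neg, inner_smul_right, abs_mul, abs_of_nonneg (by positivity)]
  calc η / √i * |⟪g, v⟫| ≤ η / √q * L ^ 2 :=
        mul_le_mul hcoeff hinner (abs_nonneg _) (by positivity)
    _ = η * L ^ 2 * (1 / √q) := by ring

theorem ConvexOn.sub_le_of_gradient_step [CompleteSpace E] {f : E → ℝ} {y : E}
    (hf : ConvexOn ℝ Set.univ f) (hfy : DifferentiableAt ℝ f y) {a L : ℝ} (ha : 0 < a)
    (hL : ‖gradient f y‖ ≤ L) (x z : E) :
    f y - f z ≤ (1 / 2 * ‖z - x‖ ^ 2 - 1 / 2 * ‖z - (x - a • gradient f y)‖ ^ 2) / a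
      + a / 2 * L ^ 2 + ⟪gradient f y, y - x⟫ := by
  have hsupport := hf.add_inner_sub_le_of_hasGradientAt hfy.hasGradientAt z
  have hdescent := inner_sub_eq_of_sub_smul ha.ne' (gradient f y) x z
  have hsplit : ⟪gradient f y, y - z⟫ = ⟪gradient f y, x - z⟫ + ⟪gradient f y, y - x⟫ := by
    rw [← inner_add_right, sub_add_sub_cancel']
  have hsq : ‖gradient f y‖ ^ 2 ≤ L ^ 2 := pow_le_pow_left₀ (norm_nonneg _) hL 2
  rw [show z - y = -(y - z) by abel, inner_neg_right] at hsupport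
  nlinarith [mul_le_mul_of_nonneg_left hsq (by positivity : 0 ≤ a / 2)]

theorem sub_le_of_stale_gradient_step [CompleteSpace E] {f : ℕ → E → ℝ} {x y u : ℕ → E}
    {η L : ℝ} {t q K : ℕ} (hη : 0 < η) (ht : 1 ≤ t) (hq : 1 ≤ q)
    (hconv : ConvexOn ℝ Set.univ (f t)) (hdiff : DifferentiableAt ℝ (f t) (y t))
    (hgrad : ∀ i, 1 ≤ i → ‖gradient (f i) (y i)‖ ≤ L)
    (hu : ∀ i, 1 ≤ i → u i = -((η / √i) • gradient (f i) (y i)))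
    (hx : x (t + 1) = x t + u t) {A B : Finset ℕ} (hA : ∀ i ∈ A, q ≤ i) (hB : ∀ i ∈ B, q ≤ i)
    (hcard : #A + #B ≤ K) (hy : y t = x t - ∑ i ∈ A, u i + ∑ i ∈ B, u i) (z : E) :
    f t (y t) - f t z
      ≤ (1 / 2 * ‖z - x t‖ ^ 2 - 1 / 2 * ‖z - x (t + 1)‖ ^ 2) * (√t / η)
        + η * L ^ 2 / 2 * (1 / √t) + η * L ^ 2 * K * (1 / √q) := by
  have hstale : ∀ i, q ≤ i → |⟪gradient (f t) (y t), u i⟫| ≤ η * L ^ 2 * (1 / √q) := by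
    intro i hi
    rw [hu i (hq.trans hi)]
    exact abs_inner_neg_div_sqrt_smul_le hη.le hq hi (hgrad t ht) (hgrad i (hq.trans hi))
  have hstale_sum := (inner_sub_sum_add_sum_sub_le (gradient (f t) (y t)) (x t) u A B
    (fun i hi => hstale i (hA i hi)) (fun i hi => hstale i (hB i hi))).trans
    (mul_le_mul_of_nonneg_right (by exact_mod_cast hcard : ((#A : ℝ) + #B) ≤ K)
      (by positivity))
  have hdescent := hconv.sub_le_of_gradient_step hdiff
    (div_pos hη (Real.sqrt_pos.2 (Nat.cast_pos.2 ht))) (hgrad t ht) (x t) z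
  rw [← hy] at hstale_sum
  rw [div_div_eq_mul_div, mul_div_assoc] at hdescent
  rw [hx, hu t ht, ← sub_eq_add_neg]
  linarith [show η / √t / 2 * L ^ 2 = η * L ^ 2 / 2 * (1 / √t) by ring]

end InnerProductSpace

theorem one_div_sqrt_add_one_le (T : ℕ) : 1 / √((T : ℝ) + 1) ≤ 2 * √((T : ℝ) + 1) - 2 * √T := by
  have h : 0 < √((T : ℝ) + 1) := Real.sqrt_pos.2 (by positivity)
  have hT := Real.sq_sqrt (Nat.cast_nonneg (α := ℝ) T)
  have hT1 := Real.sq_sqrt (by positivity : (0 : ℝ) ≤ T + 1)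
  rw [div_le_iff₀ h]
  nlinarith [sq_nonneg (√((T : ℝ) + 1) - √T), Real.sqrt_nonneg (T : ℝ)]

theorem sum_Icc_one_div_sqrt_max_sub_le (T m : ℕ) :
    ∑ t ∈ Icc 1 T, 1 / √(max 1 (t - m) : ℕ) ≤ m + 2 * √T := by
  set φ : ℕ → ℝ := fun t => 1 / √(max 1 (t - m) : ℕ)
  have hφ_le_one : ∀ t, φ t ≤ 1 := fun t => by
    refine div_le_one_of_le₀ ?_ (Real.sqrt_nonneg _)
    exact Real.one_le_sqrt.2 (by exact_mod_cast le_max_left 1 (t - m))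
  have hφ_shift : ∀ j ∈ Ioc 0 T, φ (m + j) = 1 / √j := fun j hj => by
    simp only [φ, add_tsub_cancel_left, max_eq_right (Nat.one_le_of_lt (mem_Ioc.1 hj).1)]
  calc ∑ t ∈ Icc 1 T, φ t ≤ ∑ t ∈ Ioc 0 (m + T), φ t :=
        sum_le_sum_of_subset_of_nonneg (fun t ht => by simp at ht ⊢; omega)
          fun t _ _ => by positivity
    _ = ∑ t ∈ Ioc 0 m, φ t + ∑ j ∈ Ioc 0 T, φ (m + j) := by
        rw [← sum_Ioc_consecutive _ (Nat.zero_le m) (Nat.le_add_right m T),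
          show Ioc m (m + T) = (Ioc 0 T).image (m + ·) by simp,
          sum_image fun _ _ _ _ => Nat.add_left_cancel]
    _ ≤ ∑ _t ∈ Ioc 0 m, 1 + ∑ j ∈ Icc 1 T, 1 / √j := by
        rw [sum_congr rfl hφ_shift, ← Icc_add_one_left_eq_Ioc 0 T, zero_add]
        gcongr with t
        exact hφ_le_one t
    _ ≤ m + 2 * √T := by
        simpa using sum_Icc_one_div_sqrt_le T

theorem sum_Icc_sub_mul_le (D c : ℕ → ℝ) {B : ℝ} (T : ℕ) (hc : Monotone c) (hc0 : 0 ≤ c 0)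
    (hD : ∀ t, 0 ≤ D t) (hDB : ∀ t ∈ Icc 1 (T + 1), D t ≤ B) :
    ∑ t ∈ Icc 1 T, (D t - D (t + 1)) * c t ≤ B * c T := by
  -- keeping the boundary term `- D (T + 1) * c T` makes the induction close
  suffices h : ∑ t ∈ Icc 1 T, (D t - D (t + 1)) * c t ≤ B * c T - D (T + 1) * c T by
    nlinarith [hD (T + 1), hc0.trans (hc (Nat.zero_le T))]
  induction T with
  | zero => simpa [← sub_mul] using mul_nonneg (sub_nonneg.2 (hDB 1 (by simp))) hc0
  | succ T ih =>
    rw [sum_Icc_succ_top (by omega)]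
    have ih := ih fun t ht => hDB t (by simp at ht ⊢; omega)
    have hDT := hDB (T + 1) (by simp)
    have hcT := hc (Nat.le_succ T)
    nlinarith [hD (T + 2), hc0.trans (hc (Nat.zero_le (T + 1))),
      mul_le_mul_of_nonneg_right hDT (sub_nonneg.2 hcT)]

theorem stmt_6_general (d T : ℕ)
    (P s : ℕ)
    (η L F : ℝ) (hη : 0 < η)
    (xstar : EuclideanSpace ℝ (Fin d))
    (f : ℕ → EuclideanSpace ℝ (Fin d) → ℝ)
    (hconv : ∀ t, 1 ≤ t → ConvexOn ℝ Set.univ (f t))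
    (hdiff : ∀ t, 1 ≤ t → Differentiable ℝ (f t))
    (hgrad : ∀ t, 1 ≤ t → ∀ x, ‖gradient (f t) x‖ ≤ L)
    (x xtilde u : ℕ → EuclideanSpace ℝ (Fin d))
    (hu : ∀ t, 1 ≤ t → u t = -((η / Real.sqrt t) • gradient (f t) (xtilde t)))
    (hx : ∀ t, 1 ≤ t → x (t+1) = x t + u t)
    (hssp : ∀ t, 1 ≤ t → ∃ A B : Finset ℕ,
      Disjoint A B
      ∧ A ⊆ Finset.Icc (max 1 (t - (s+1)*P)) (t + s*P)
      ∧ B ⊆ Finset.Icc (max 1 (t - (s+1)*P)) (t + s*P)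
      ∧ A.card + B.card ≤ (2*s+1)*P
      ∧ xtilde t = x t - (∑ i ∈ A, u i) + (∑ i ∈ B, u i))
    (hdiam : ∀ t ∈ Finset.Icc 1 (T+1), (1/2) * ‖xstar - x t‖^2 ≤ F^2) :
    ∑ t ∈ Finset.Icc 1 T, (f t (xtilde t) - f t xstar)
      ≤ η * L^2 * Real.sqrt T + (F^2 / η) * Real.sqrt T
        + η * L^2 * ((2*(s:ℝ)+1)*(P:ℝ)) * (((s:ℝ)+1)*(P:ℝ) + 2 * Real.sqrt T) := by
  have hstep : ∀ t ∈ Icc 1 T, f t (xtilde t) - f t xstar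
      ≤ (1 / 2 * ‖xstar - x t‖ ^ 2 - 1 / 2 * ‖xstar - x (t + 1)‖ ^ 2) * (√t / η)
        + η * L ^ 2 / 2 * (1 / √t)
        + η * L ^ 2 * (((2 * s + 1) * P : ℕ) : ℝ) * (1 / √(max 1 (t - (s + 1) * P) : ℕ)) := by
    intro t ht
    have ht1 : 1 ≤ t := (mem_Icc.1 ht).1
    obtain ⟨A, B, -, hA, hB, hcard, hxt⟩ := hssp t ht1
    exact sub_le_of_stale_gradient_step hη ht1 (le_max_left _ _) (hconv t ht1)
      (hdiff t ht1 _) (fun i hi => hgrad i hi _) hu (hx t ht1)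
      (fun i hi => (mem_Icc.1 (hA hi)).1) (fun i hi => (mem_Icc.1 (hB hi)).1) hcard hxt xstar
  refine (sum_le_sum hstep).trans ?_
  rw [sum_add_distrib, sum_add_distrib, ← mul_sum, ← mul_sum]
  calc _ ≤ F ^ 2 * (√T / η) + η * L ^ 2 / 2 * (2 * √T)
        + η * L ^ 2 * (((2 * s + 1) * P : ℕ) : ℝ) * (((s + 1) * P : ℕ) + 2 * √T) := by
        gcongr
        · exact sum_Icc_sub_mul_le (fun t => 1 / 2 * ‖xstar - x t‖ ^ 2) (fun t => √t / η) T
            (fun a b hab => by dsimp only; gcongr) (by simp) (fun t => by positivity) hdiam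
        · exact sum_Icc_one_div_sqrt_le T
        · exact sum_Icc_one_div_sqrt_max_sub_le T _
    _ = _ := by push_cast; ring

/-- Theorem 3 (SGD under SSP, convergence in expectation): regret bound O(√T). -/
theorem stmt_6 (d T : ℕ) (hd : 1 ≤ d) (hT : 1 ≤ T)
    (P s : ℕ) (hP : 1 ≤ P)
    (η L F : ℝ) (hη : 0 < η) (hL : 0 ≤ L) (hF : 0 ≤ F)
    (xstar : EuclideanSpace ℝ (Fin d))
    (f : ℕ → EuclideanSpace ℝ (Fin d) → ℝ)
    (hconv : ∀ t, 1 ≤ t → ConvexOn ℝ Set.univ (f t))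
    (hdiff : ∀ t, 1 ≤ t → Differentiable ℝ (f t))
    (hgrad : ∀ t, 1 ≤ t → ∀ x, ‖gradient (f t) x‖ ≤ L)
    (x xtilde u : ℕ → EuclideanSpace ℝ (Fin d))
    (hu : ∀ t, 1 ≤ t → u t = -((η / Real.sqrt t) • gradient (f t) (xtilde t)))
    (hx : ∀ t, 1 ≤ t → x (t+1) = x t + u t)
    (hssp : ∀ t, 1 ≤ t → ∃ A B : Finset ℕ,
      Disjoint A B
      ∧ A ⊆ Finset.Icc (max 1 (t - (s+1)*P)) (t + s*P)
      ∧ B ⊆ Finset.Icc (max 1 (t - (s+1)*P)) (t + s*P)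
      ∧ A.card + B.card ≤ (2*s+1)*P
      ∧ xtilde t = x t - (∑ i ∈ A, u i) + (∑ i ∈ B, u i))
    (hdiam : ∀ t ∈ Finset.Icc 1 (T+1), (1/2) * ‖xstar - x t‖^2 ≤ F^2) :
    ∑ t ∈ Finset.Icc 1 T, (f t (xtilde t) - f t xstar)
      ≤ η * L^2 * Real.sqrt T + (F^2 / η) * Real.sqrt T
        + η * L^2 * ((2*(s:ℝ)+1)*(P:ℝ)) * (((s:ℝ)+1)*(P:ℝ) + 2 * Real.sqrt T) :=
  stmt_6_general d T P s η L F hη xstar f hconv hdiff hgrad x xtilde u hu hx hssp hdiam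
end

section
/- Fix d ≥ 1, T ≥ 1, reals η > 0, L ≥ 0, F ≥ 0, x* ∈ ℝ^d, and nonnegative reals γ_1, …, γ_T. For each t let f_t : ℝ^d → ℝ be convex and differentiable with ‖∇f_t(x)‖₂ ≤ L for all x, let η_t = η/√t, let x_{t+1} = x_t − η_t ∇f_t(x̃_t), and suppose x̃_t = x_t + ū_t c_t where ū_t is a real with 0 ≤ ū_t ≤ η L/√t and c_t ∈ ℝ^d with ‖c_t‖₂ ≤ γ_t. Assume ½‖x* − x_t‖₂² ≤ F² for all t = 1,…,T+1. Then ∑_{t=1}^T ( f_t(x̃_t) − f_t(x*) ) ≤ η L² √T + (F²/η) √T + ∑_{t=1}^T (η/√t) L² γ_t. -/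
open Real Finset
open scoped RealInnerProductSpace Gradient

/-!
Convexity gives `f(x̃) - f(x*) ≤ ⟪∇f(x̃), x̃ - x*⟫`. Writing `x̃ = x + ū c`, the part
`⟪∇f(x̃), x - x*⟫` is, through the update `x' = x - η_t ∇f(x̃)`, the drop of `‖x* - x‖² / (2η_t)`
plus `η_t ‖∇f(x̃)‖² / 2`, while the staleness part is at most `ū L γ ≤ η_t L² γ`. Summing over `t`,
Abel summation against the increasing weights `√t / η` and the diameter bound turn the distance
drops into `F² √T / η`, and `∑ 1/√t ≤ 2√T` bounds the step-size terms.
-/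

theorem ConvexOn.add_fderiv_sub_le_s7 {E : Type*} [NormedAddCommGroup E] [NormedSpace ℝ E]
    {s : Set E} {f : E → ℝ} (hf : ConvexOn ℝ s f) {x y : E} (hx : x ∈ s) (hy : y ∈ s)
    (hdf : DifferentiableAt ℝ f x) :
    f x + fderiv ℝ f x (y - x) ≤ f y := by
  let g : ℝ → ℝ := f ∘ AffineMap.lineMap x y
  have hg : ConvexOn ℝ (Set.Icc 0 1) g :=
    (hf.comp_affineMap _).subset (fun _ ht => hf.1.lineMap_mem hx hy ht) (convex_Icc 0 1)
  have hg' : HasDerivAt g (fderiv ℝ f x (y - x)) 0 := by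
    have hdf' : HasFDerivAt f (fderiv ℝ f x) (AffineMap.lineMap x y (0 : ℝ)) := by
      simpa using hdf.hasFDerivAt
    exact hdf'.comp_hasDerivAt (0 : ℝ) AffineMap.hasDerivAt_lineMap
  have := hg.le_slope_of_hasDerivAt (by simp) (by simp) zero_lt_one hg'
  simp only [slope_def_field, g, Function.comp_apply, AffineMap.lineMap_apply_zero,
    AffineMap.lineMap_apply_one, sub_zero, div_one] at this
  linarith

theorem sum_Icc_inv_sqrt_le (T : ℕ) : ∑ t ∈ Icc 1 T, (√t)⁻¹ ≤ 2 * √T := by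
  induction T with
  | zero => simp
  | succ T ih =>
    rw [sum_Icc_succ_top (by omega), Nat.cast_succ]
    have hpos : 0 < √(T + 1 : ℝ) := by positivity
    have hsq : √(T + 1 : ℝ) ^ 2 = T + 1 := sq_sqrt (by positivity)
    have hsq' : √(T : ℝ) ^ 2 = T := sq_sqrt (by positivity)
    -- `1 / √(T+1) ≤ 2 (√(T+1) - √T)` is `(√(T+1) - √T)² ≥ 0` after multiplying out
    have key : (√(T + 1 : ℝ))⁻¹ ≤ 2 * (√(T + 1 : ℝ) - √T) := by
      rw [inv_le_iff_one_le_mul₀' hpos]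
      nlinarith [sq_nonneg (√(T + 1 : ℝ) - √T)]
    linarith

theorem sum_Icc_sub_mul_le_of_monotone {a b : ℕ → ℝ} {C : ℝ} (hb : Monotone b) (hb0 : 0 ≤ b 0)
    {T : ℕ} (ha : ∀ t ∈ Icc 1 (T + 1), a t ≤ C) :
    ∑ t ∈ Icc 1 T, (a t - a (t + 1)) * b t ≤ (C - a (T + 1)) * b T := by
  induction T with
  | zero => simpa using mul_nonneg (sub_nonneg.2 (ha 1 (by simp))) hb0
  | succ T ih =>
    rw [sum_Icc_succ_top (by omega)]
    have := ih fun t ht => ha t (Icc_subset_Icc_right (by omega) ht)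
    have haT : a (T + 1) ≤ C := ha (T + 1) (by simp)
    nlinarith [hb (Nat.le_succ T)]

section GradientStep

variable {E : Type*} [NormedAddCommGroup E] [InnerProductSpace ℝ E]

theorem inner_sub_eq_of_eq_sub_smul {x x' g z : E} {e : ℝ} (he : e ≠ 0) (hx' : x' = x - e • g) :
    ⟪g, x - z⟫ = (‖z - x‖ ^ 2 - ‖z - x'‖ ^ 2) / (2 * e) + e / 2 * ‖g‖ ^ 2 := by
  have hz : z - x' = (z - x) + e • g := by rw [hx']; abel
  rw [hz, norm_add_sq_real, real_inner_smul_right, norm_smul, Real.norm_eq_abs, mul_pow, sq_abs,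
    ← neg_sub x z, inner_neg_left, real_inner_comm]
  field_simp
  ring

variable [CompleteSpace E]

theorem ConvexOn.sub_le_of_gradient_step_s7 {s : Set E} {f : E → ℝ} (hf : ConvexOn ℝ s f)
    {x x' y c z : E} {e u L γ : ℝ} (hys : y ∈ s) (hzs : z ∈ s) (hdf : DifferentiableAt ℝ f y)
    (he : 0 < e) (hg : ‖∇ f y‖ ≤ L) (hc : ‖c‖ ≤ γ) (hu : 0 ≤ u) (hue : u ≤ e * L)
    (hx' : x' = x - e • ∇ f y) (hy : y = x + u • c) :
    f y - f z ≤ (‖z - x‖ ^ 2 - ‖z - x'‖ ^ 2) / (2 * e) + e / 2 * L ^ 2 + e * L ^ 2 * γ := by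
  set g := ∇ f y
  have hconv : f y - f z ≤ ⟪g, y - z⟫ := by
    have := hf.add_fderiv_sub_le_s7 hys hzs hdf
    rw [← inner_gradient_left, ← neg_sub y z, inner_neg_right] at this
    linarith
  have hL : 0 ≤ L := (norm_nonneg g).trans hg
  have hstale : u * ⟪g, c⟫ ≤ e * L ^ 2 * γ :=
    calc u * ⟪g, c⟫ ≤ u * (L * γ) := mul_le_mul_of_nonneg_left
          ((real_inner_le_norm g c).trans (mul_le_mul hg hc (norm_nonneg c) hL)) hu
      _ ≤ (e * L) * (L * γ) :=
          mul_le_mul_of_nonneg_right hue (mul_nonneg hL ((norm_nonneg c).trans hc))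
      _ = e * L ^ 2 * γ := by ring
  have hg2 : e / 2 * ‖g‖ ^ 2 ≤ e / 2 * L ^ 2 := by gcongr
  have hsplit : ⟪g, y - z⟫ = ⟪g, x - z⟫ + u * ⟪g, c⟫ := by
    rw [hy, add_sub_right_comm, inner_add_right, real_inner_smul_right]
  rw [hsplit, inner_sub_eq_of_eq_sub_smul he.ne' hx'] at hconv
  linarith

end GradientStep

theorem stmt_7_general (d T : ℕ)
    (η L F : ℝ) (hη : 0 < η)
    (xstar : EuclideanSpace ℝ (Fin d))
    (γ : ℕ → ℝ)
    (f : ℕ → EuclideanSpace ℝ (Fin d) → ℝ)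
    (hconv : ∀ t ∈ Finset.Icc 1 T, ConvexOn ℝ Set.univ (f t))
    (hdiff : ∀ t ∈ Finset.Icc 1 T, Differentiable ℝ (f t))
    (hgrad : ∀ t ∈ Finset.Icc 1 T, ∀ x, ‖gradient (f t) x‖ ≤ L)
    (x xtilde : ℕ → EuclideanSpace ℝ (Fin d))
    (ubar : ℕ → ℝ) (c : ℕ → EuclideanSpace ℝ (Fin d))
    (hrec : ∀ t ∈ Finset.Icc 1 T,
      x (t+1) = x t - (η / Real.sqrt t) • gradient (f t) (xtilde t))
    (hub : ∀ t ∈ Finset.Icc 1 T, 0 ≤ ubar t ∧ ubar t ≤ η * L / Real.sqrt t)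
    (hdecomp : ∀ t ∈ Finset.Icc 1 T, xtilde t = x t + ubar t • c t)
    (hc : ∀ t ∈ Finset.Icc 1 T, ‖c t‖ ≤ γ t)
    (hdiam : ∀ t ∈ Finset.Icc 1 (T+1), (1/2) * ‖xstar - x t‖^2 ≤ F^2) :
    ∑ t ∈ Finset.Icc 1 T, (f t (xtilde t) - f t xstar)
      ≤ η * L^2 * Real.sqrt T + (F^2 / η) * Real.sqrt T
        + ∑ t ∈ Finset.Icc 1 T, (η / Real.sqrt t) * L^2 * γ t := by
  set a : ℕ → ℝ := fun t => ‖xstar - x t‖ ^ 2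
  set b : ℕ → ℝ := fun t => √t / (2 * η)
  have hstep : ∀ t ∈ Icc 1 T, f t (xtilde t) - f t xstar
      ≤ (a t - a (t + 1)) * b t + η * L ^ 2 / 2 * (√t)⁻¹ + (η / √t) * L ^ 2 * γ t := by
    intro t ht
    have hst : 0 < √(t : ℝ) := sqrt_pos.2 (by exact_mod_cast (mem_Icc.1 ht).1)
    refine ((hconv t ht).sub_le_of_gradient_step_s7 (Set.mem_univ _) (Set.mem_univ _)
      (hdiff t ht _) (div_pos hη hst) (hgrad t ht _) (hc t ht) (hub t ht).1 ?_ (hrec t ht)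
      (hdecomp t ht)).trans_eq ?_
    · exact (hub t ht).2.trans_eq (by ring)
    · simp only [a, b]
      field_simp
  have hb : Monotone b := fun i j hij =>
    div_le_div_of_nonneg_right (sqrt_le_sqrt (by exact_mod_cast hij)) (by positivity)
  have htele : ∑ t ∈ Icc 1 T, (a t - a (t + 1)) * b t ≤ F ^ 2 / η * √T :=
    calc _ ≤ (2 * F ^ 2 - a (T + 1)) * b T :=
          sum_Icc_sub_mul_le_of_monotone hb (by simp [b]) fun t ht => by linarith [hdiam t ht]
      _ ≤ 2 * F ^ 2 * b T :=
          mul_le_mul_of_nonneg_right (sub_le_self _ (by positivity)) (by positivity)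
      _ = F ^ 2 / η * √T := by
          simp only [b]
          field_simp
  calc _ ≤ ∑ t ∈ Icc 1 T, ((a t - a (t + 1)) * b t + η * L ^ 2 / 2 * (√t)⁻¹
          + (η / √t) * L ^ 2 * γ t) := sum_le_sum hstep
    _ = ∑ t ∈ Icc 1 T, (a t - a (t + 1)) * b t + η * L ^ 2 / 2 * ∑ t ∈ Icc 1 T, (√t)⁻¹
          + ∑ t ∈ Icc 1 T, (η / √t) * L ^ 2 * γ t := by
          rw [sum_add_distrib, sum_add_distrib, mul_sum]
    _ ≤ F ^ 2 / η * √T + η * L ^ 2 / 2 * (2 * √T) + ∑ t ∈ Icc 1 T, (η / √t) * L ^ 2 * γ t := by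
          gcongr
          exact sum_Icc_inv_sqrt_le T
    _ = _ := by ring

/-- The deterministic risk bound (eq. 12) in the proof of Theorem 5:
regret splits into step-size, diameter, and staleness-weighted terms. -/
theorem stmt_7 (d T : ℕ) (hd : 1 ≤ d) (hT : 1 ≤ T)
    (η L F : ℝ) (hη : 0 < η) (hL : 0 ≤ L) (hF : 0 ≤ F)
    (xstar : EuclideanSpace ℝ (Fin d))
    (γ : ℕ → ℝ) (hγ : ∀ t ∈ Finset.Icc 1 T, 0 ≤ γ t)
    (f : ℕ → EuclideanSpace ℝ (Fin d) → ℝ)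
    (hconv : ∀ t ∈ Finset.Icc 1 T, ConvexOn ℝ Set.univ (f t))
    (hdiff : ∀ t ∈ Finset.Icc 1 T, Differentiable ℝ (f t))
    (hgrad : ∀ t ∈ Finset.Icc 1 T, ∀ x, ‖gradient (f t) x‖ ≤ L)
    (x xtilde : ℕ → EuclideanSpace ℝ (Fin d))
    (ubar : ℕ → ℝ) (c : ℕ → EuclideanSpace ℝ (Fin d))
    (hrec : ∀ t ∈ Finset.Icc 1 T,
      x (t+1) = x t - (η / Real.sqrt t) • gradient (f t) (xtilde t))
    (hub : ∀ t ∈ Finset.Icc 1 T, 0 ≤ ubar t ∧ ubar t ≤ η * L / Real.sqrt t)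
    (hdecomp : ∀ t ∈ Finset.Icc 1 T, xtilde t = x t + ubar t • c t)
    (hc : ∀ t ∈ Finset.Icc 1 T, ‖c t‖ ≤ γ t)
    (hdiam : ∀ t ∈ Finset.Icc 1 (T+1), (1/2) * ‖xstar - x t‖^2 ≤ F^2) :
    ∑ t ∈ Finset.Icc 1 T, (f t (xtilde t) - f t xstar)
      ≤ η * L^2 * Real.sqrt T + (F^2 / η) * Real.sqrt T
        + ∑ t ∈ Finset.Icc 1 T, (η / Real.sqrt t) * L^2 * γ t :=
  stmt_7_general d T η L F hη xstar γ f hconv hdiff hgrad x xtilde ubar c hrec hub hdecomp hc hdiam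
end
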